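/- Necessary condition for minimality (diagonality): let P ∈ ℝ^{k×k} be a signed permutation matrix (exactly one nonzero entry, equal to ±1, in each row and each column), and set W1 = P (I − ΛS⁻²)^{1/2} Uᵀ, W2 = U (I − ΛS⁻²)^{1/2} Pᵀ. If (W1, W2) is a local minimum of L, then P is diagonal. -/

import Mathlib

/-!
Rotating two rows `p, q` of the encoder by a Givens rotation `R t` and the corresponding columns of
the decoder by `(R t)ᵀ` leaves `W2 * W1`, hence the reconstruction error, unchanged, while each
regulariser changes by `sin t ^ 2 * (λ q - λ p) * (d (σ p) - d (σ q))`, where `d = 1 - λ / σ²` and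
`σ` is the permutation underlying `P`. If `P` is not diagonal, `σ` has an inversion `p < q`,
`σ q < σ p`; as `λ` increases and `d` strictly decreases, the loss then drops along the curve.
-/

open Matrix BigOperators

attribute [local instance] Matrix.frobeniusNormedAddCommGroup Matrix.frobeniusNormedSpace

/-- Squared Frobenius norm. -/
noncomputable def frobSq {a b : ℕ} (M : Matrix (Fin a) (Fin b) ℝ) : ℝ :=
  ∑ i, ∑ j, (M i j) ^ 2

/-- The non-uniform ℓ2 regularized linear autoencoder loss. -/
noncomputable def LAEloss (m k n : ℕ) (X : Matrix (Fin m) (Fin n) ℝ) (lam : Fin k → ℝ)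
    (p : Matrix (Fin k) (Fin m) ℝ × Matrix (Fin m) (Fin k) ℝ) : ℝ :=
  (1 / (n : ℝ)) * frobSq (X - p.2 * p.1 * X)
    + frobSq (Matrix.diagonal (fun i => Real.sqrt (lam i)) * p.1)
    + frobSq (p.2 * Matrix.diagonal (fun i => Real.sqrt (lam i)))

open Real

lemma frobSq_transpose {a b : ℕ} (M : Matrix (Fin a) (Fin b) ℝ) : frobSq Mᵀ = frobSq M :=
  Finset.sum_comm

lemma frobSq_eq_trace {a b : ℕ} (M : Matrix (Fin a) (Fin b) ℝ) : frobSq M = trace (M * Mᵀ) := by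
  simp [frobSq, trace, mul_apply, sq]

lemma frobSq_mul_transpose_of_transpose_mul_eq_one {a b c : ℕ} (M : Matrix (Fin a) (Fin c) ℝ)
    {U : Matrix (Fin b) (Fin c) ℝ} (hU : Uᵀ * U = 1) : frobSq (M * Uᵀ) = frobSq M := by
  rw [frobSq_eq_trace, frobSq_eq_trace, transpose_mul, transpose_transpose, Matrix.mul_assoc,
    ← Matrix.mul_assoc Uᵀ, hU, Matrix.one_mul]

lemma frobSq_mul_of_transpose_mul_eq_one {a b c : ℕ} {U : Matrix (Fin b) (Fin a) ℝ}
    (hU : Uᵀ * U = 1) (M : Matrix (Fin a) (Fin c) ℝ) : frobSq (U * M) = frobSq M := by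
  rw [← frobSq_transpose, transpose_mul, frobSq_mul_transpose_of_transpose_mul_eq_one _ hU,
    frobSq_transpose]

section Givens

variable {ι κ : Type*} [DecidableEq ι]

noncomputable def givensRotation (p q : ι) (t : ℝ) : Matrix ι ι ℝ :=
  of fun i j =>
    if i = p then (if j = p then cos t else if j = q then -sin t else 0)
    else if i = q then (if j = p then sin t else if j = q then cos t else 0)
    else (1 : Matrix ι ι ℝ) i j

lemma givensRotation_zero (p q : ι) : givensRotation p q 0 = 1 := by
  ext i j
  simp only [givensRotation, of_apply, cos_zero, sin_zero, neg_zero, one_apply]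
  split_ifs <;> simp_all

lemma givensRotation_transpose (p q : ι) (t : ℝ) :
    (givensRotation p q t)ᵀ = givensRotation p q (-t) := by
  ext i j
  simp only [givensRotation, transpose_apply, of_apply, cos_neg, sin_neg, neg_neg, one_apply]
  split_ifs <;> subst_vars <;> simp_all

@[fun_prop]
lemma continuous_givensRotation (p q : ι) : Continuous (givensRotation p q) := by
  refine continuous_matrix fun i j => ?_
  simp only [givensRotation, of_apply]
  split_ifs <;> fun_prop

variable [Fintype ι] {p q : ι}

lemma givensRotation_mul_apply (hpq : p ≠ q) (t : ℝ) (M : Matrix ι κ ℝ) (i : ι) (j : κ) :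
    (givensRotation p q t * M) i j =
      if i = p then cos t * M p j - sin t * M q j
      else if i = q then sin t * M p j + cos t * M q j
      else M i j := by
  rw [mul_apply]
  by_cases hip : i = p
  · subst hip
    rw [Fintype.sum_eq_add i q hpq fun l hl => by simp [givensRotation, hl.1, hl.2]]
    simp only [givensRotation, of_apply, ↓reduceIte, hpq.symm, neg_mul]
    ring
  by_cases hiq : i = q
  · subst hiq
    rw [Fintype.sum_eq_add p i hpq fun l hl => by simp [givensRotation, hl.1, hl.2]]
    simp [givensRotation, hip]
  rw [Fintype.sum_eq_single i fun l hl => by simp [givensRotation, hip, hiq, one_apply, Ne.symm hl]]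
  simp [givensRotation, hip, hiq]

lemma givensRotation_mul_givensRotation (hpq : p ≠ q) (s t : ℝ) :
    givensRotation p q s * givensRotation p q t = givensRotation p q (s + t) := by
  ext i j
  rw [givensRotation_mul_apply hpq]
  simp only [givensRotation, of_apply, one_apply, cos_add, sin_add]
  split_ifs <;> subst_vars <;> simp_all <;> ring

lemma givensRotation_transpose_mul_self (hpq : p ≠ q) (t : ℝ) :
    (givensRotation p q t)ᵀ * givensRotation p q t = 1 := by
  rw [givensRotation_transpose, givensRotation_mul_givensRotation hpq, neg_add_cancel,
    givensRotation_zero]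

end Givens

section Weighted

variable {ι κ : Type*} [Fintype ι] [Fintype κ]

noncomputable def weightedFrobSq (a : ι → ℝ) (b : κ → ℝ) (M : Matrix ι κ ℝ) : ℝ :=
  ∑ i, ∑ j, a i * M i j ^ 2 * b j

lemma weightedFrobSq_givensRotation_mul [DecidableEq ι] {p q : ι} (hpq : p ≠ q) (t : ℝ)
    (a : ι → ℝ) (b : κ → ℝ) (M : Matrix ι κ ℝ) :
    weightedFrobSq a b (givensRotation p q t * M) = weightedFrobSq a b M
      + sin t ^ 2 * (a q - a p) * ∑ j, (M p j ^ 2 - M q j ^ 2) * b j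
      + 2 * sin t * cos t * (a q - a p) * ∑ j, M p j * M q j * b j := by
  have hrest : ∀ i, i ≠ p ∧ i ≠ q → ∑ j, a i * (givensRotation p q t * M) i j ^ 2 * b j
      - ∑ j, a i * M i j ^ 2 * b j = 0 := fun i hi => by
    simp [givensRotation_mul_apply hpq, hi.1, hi.2]
  rw [add_assoc, ← sub_eq_iff_eq_add', weightedFrobSq, weightedFrobSq, ← Finset.sum_sub_distrib,
    Fintype.sum_eq_add p q hpq hrest]
  simp only [givensRotation_mul_apply hpq, if_pos, if_neg hpq.symm, Finset.mul_sum,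
    ← Finset.sum_sub_distrib, ← Finset.sum_add_distrib]
  refine Finset.sum_congr rfl fun j _ => ?_
  linear_combination (a p * M p j ^ 2 + a q * M q j ^ 2) * b j * sin_sq_add_cos_sq t

end Weighted

lemma frobSq_diagonal_sqrt_mul_mul_diagonal_sqrt {a b : ℕ} {u : Fin a → ℝ} {v : Fin b → ℝ}
    (hu : ∀ i, 0 ≤ u i) (hv : ∀ j, 0 ≤ v j) (M : Matrix (Fin a) (Fin b) ℝ) :
    frobSq (diagonal (fun i => √(u i)) * M * diagonal (fun j => √(v j)))
      = weightedFrobSq u v M := by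
  simp [frobSq, weightedFrobSq, mul_pow, hu, hv]

lemma LAEloss_mul_transpose {m k n : ℕ} (X : Matrix (Fin m) (Fin n) ℝ) (lam : Fin k → ℝ)
    {U : Matrix (Fin m) (Fin k) ℝ} (hU : Uᵀ * U = 1) (M : Matrix (Fin k) (Fin k) ℝ) :
    LAEloss m k n X lam (M * Uᵀ, U * Mᵀ) = 1 / n * frobSq (X - U * (Mᵀ * M) * Uᵀ * X)
      + 2 * frobSq (diagonal (fun i => √(lam i)) * M) := by
  have hdual : U * Mᵀ * diagonal (fun i => √(lam i))
      = U * (diagonal (fun i => √(lam i)) * M)ᵀ := by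
    rw [transpose_mul, diagonal_transpose, Matrix.mul_assoc]
  dsimp only [LAEloss]
  rw [hdual, frobSq_mul_of_transpose_mul_eq_one hU, frobSq_transpose,
    ← Matrix.mul_assoc (diagonal _) M, frobSq_mul_transpose_of_transpose_mul_eq_one _ hU,
    ← Matrix.mul_assoc (U * Mᵀ) M, Matrix.mul_assoc U Mᵀ M]
  ring

lemma LAEloss_givensRotation_mul {m k n : ℕ} (X : Matrix (Fin m) (Fin n) ℝ) {lam d : Fin k → ℝ}
    (hlam : ∀ i, 0 ≤ lam i) (hd : ∀ i, 0 ≤ d i) {U : Matrix (Fin m) (Fin k) ℝ} (hU : Uᵀ * U = 1)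
    {P : Matrix (Fin k) (Fin k) ℝ} {W1 : Matrix (Fin k) (Fin m) ℝ} {W2 : Matrix (Fin m) (Fin k) ℝ}
    (hW1 : W1 = P * diagonal (fun i => √(d i)) * Uᵀ)
    (hW2 : W2 = U * diagonal (fun i => √(d i)) * Pᵀ)
    {p q : Fin k} (hpq : p ≠ q) (horth : ∑ j, P p j * P q j * d j = 0) (t : ℝ) :
    LAEloss m k n X lam (givensRotation p q t * W1, W2 * (givensRotation p q t)ᵀ)
      = LAEloss m k n X lam (W1, W2)
        + sin t ^ 2 * (2 * (lam q - lam p) * ∑ j, (P p j ^ 2 - P q j ^ 2) * d j) := by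
  set D := diagonal (fun i => √(d i))
  have hcurve : ∀ s, (givensRotation p q s * W1, W2 * (givensRotation p q s)ᵀ)
      = (givensRotation p q s * P * D * Uᵀ, U * (givensRotation p q s * P * D)ᵀ) := fun s => by
    simp [hW1, hW2, D, transpose_mul, Matrix.mul_assoc]
  have hgram : ∀ s, (givensRotation p q s * P * D)ᵀ * (givensRotation p q s * P * D)
      = (P * D)ᵀ * (P * D) := fun s => by
    simp only [transpose_mul, Matrix.mul_assoc]
    rw [← Matrix.mul_assoc (givensRotation p q s)ᵀ, givensRotation_transpose_mul_self hpq,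
      Matrix.one_mul]
  have hreg : ∀ s, frobSq (diagonal (fun i => √(lam i)) * (givensRotation p q s * P * D))
      = weightedFrobSq lam d (givensRotation p q s * P) := fun s => by
    rw [← Matrix.mul_assoc, frobSq_diagonal_sqrt_mul_mul_diagonal_sqrt hlam hd]
  have h0 : (W1, W2) = (P * D * Uᵀ, U * (P * D)ᵀ) := by
    simpa [givensRotation_zero] using hcurve 0
  rw [hcurve, h0, LAEloss_mul_transpose X lam hU, LAEloss_mul_transpose X lam hU, hgram, hreg,
    ← Matrix.one_mul P, ← givensRotation_zero p q, hreg, givensRotation_zero, Matrix.one_mul,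
    weightedFrobSq_givensRotation_mul hpq, horth]
  ring

lemma exists_injective_sq_eq_ite {ι : Type*} [DecidableEq ι] {P : Matrix ι ι ℝ}
    (hP01 : ∀ i j, P i j = 0 ∨ P i j = 1 ∨ P i j = -1)
    (hProw : ∀ i, ∃! j, P i j ≠ 0) (hPcol : ∀ j, ∃! i, P i j ≠ 0) :
    ∃ σ : ι → ι, Function.Injective σ ∧ ∀ i j, P i j ^ 2 = if j = σ i then 1 else 0 := by
  choose σ hσ hσ_unique using hProw
  refine ⟨σ, fun x y hxy => (hPcol (σ x)).unique (hσ x) (hxy ▸ hσ y), fun i j => ?_⟩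
  split_ifs with hj
  · subst hj
    rcases hP01 i (σ i) with h | h | h
    · exact absurd h (hσ i)
    all_goals simp [h]
  · have : P i j = 0 := by
      by_contra h
      exact hj (hσ_unique i j h)
    simp [this]

section SupportFunction

variable {ι : Type*} [Fintype ι] [DecidableEq ι] {P : Matrix ι ι ℝ} {σ : ι → ι}

lemma sum_sq_mul_eq_of_sq_eq_ite (hP : ∀ i j, P i j ^ 2 = if j = σ i then 1 else 0)
    (b : ι → ℝ) (i : ι) : ∑ j, P i j ^ 2 * b j = b (σ i) := by
  simp [hP]

lemma sum_mul_mul_eq_zero_of_sq_eq_ite (hP : ∀ i j, P i j ^ 2 = if j = σ i then 1 else 0)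
    {p q : ι} (hpq : σ p ≠ σ q) (b : ι → ℝ) : ∑ j, P p j * P q j * b j = 0 := by
  refine Fintype.sum_eq_zero _ fun j => ?_
  have : (P p j * P q j) ^ 2 = 0 := by
    rw [mul_pow, hP, hP]
    split_ifs with hp hq <;> simp_all
  simp [pow_eq_zero_iff two_ne_zero |>.mp this]

end SupportFunction

lemma exists_lt_and_lt_of_injective {α : Type*} [LinearOrder α] [Finite α] {f : α → α}
    (hf : Function.Injective f) {a : α} (ha : f a ≠ a) : ∃ p q, p < q ∧ f q < f p := by
  by_contra! h
  exact ha (StrictMono.apply_eq fun p q hpq => (h p q hpq).lt_of_ne (hf.ne hpq.ne))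

lemma nonneg_of_isLocalMin_add_sin_sq_mul {A c : ℝ}
    (h : IsLocalMin (fun t => A + sin t ^ 2 * c) 0) : 0 ≤ c := by
  obtain ⟨t, hmin, ht⟩ :=
    ((h.filter_mono nhdsWithin_le_nhds).and (Ioo_mem_nhdsGT pi_pos)).exists
  have hsin : 0 < sin t := sin_pos_of_pos_of_lt_pi ht.1 ht.2
  simp only [sin_zero] at hmin
  nlinarith [sq_pos_of_pos hsin]

lemma strictAnti_one_sub_div {ι : Type*} [Preorder ι] {a b : ι → ℝ} (ha : StrictMono a)
    (ha_nonneg : ∀ i, 0 ≤ a i) (hb : StrictAnti b) (hb_pos : ∀ i, 0 < b i) :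
    StrictAnti fun i => 1 - a i / b i := fun _ _ hxy =>
  sub_lt_sub_left (div_lt_div₀ (ha hxy) (hb hxy).le (ha_nonneg _) (hb_pos _)) 1

/-- Necessary condition for minimality (diagonality): if `P` is a signed permutation matrix
and `(P (I − ΛS⁻²)^{1/2} Uᵀ, U (I − ΛS⁻²)^{1/2} Pᵀ)` is a local minimum of `L`, then `P`
is diagonal. -/
theorem local_min_implies_diagonal (m k n : ℕ) (hk : 1 ≤ k)
    (X : Matrix (Fin m) (Fin n) ℝ) (lam : Fin k → ℝ)
    (hlam_pos : ∀ i, 0 < lam i) (hlam_mono : StrictMono lam)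
    (sig2 : Fin k → ℝ) (hs_anti : StrictAnti sig2)
    (U : Matrix (Fin m) (Fin k) ℝ) (hUorth : Uᵀ * U = 1)
    (hlam_last : lam ⟨k - 1, by omega⟩ < sig2 ⟨k - 1, by omega⟩)
    (P : Matrix (Fin k) (Fin k) ℝ)
    (hP01 : ∀ i j, P i j = 0 ∨ P i j = 1 ∨ P i j = -1)
    (hProw : ∀ i : Fin k, ∃! j : Fin k, P i j ≠ 0)
    (hPcol : ∀ j : Fin k, ∃! i : Fin k, P i j ≠ 0)
    (W1 : Matrix (Fin k) (Fin m) ℝ) (W2 : Matrix (Fin m) (Fin k) ℝ)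
    (hW1 : W1 = P * Matrix.diagonal (fun i => Real.sqrt (1 - lam i / sig2 i)) * Uᵀ)
    (hW2 : W2 = U * Matrix.diagonal (fun i => Real.sqrt (1 - lam i / sig2 i)) * Pᵀ)
    (hloc : IsLocalMin (LAEloss m k n X lam) (W1, W2)) :
    ∀ i j, i ≠ j → P i j = 0 := by
  intro a b hab
  by_contra hPab
  have hlt : ∀ i, lam i < sig2 i := fun i =>
    have hi : i ≤ ⟨k - 1, by omega⟩ := Nat.le_sub_one_of_lt i.isLt
    (hlam_mono.monotone hi).trans_lt (hlam_last.trans_le (hs_anti.antitone hi))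
  have hsig_pos : ∀ i, 0 < sig2 i := fun i => (hlam_pos i).trans (hlt i)
  have hd : ∀ i, 0 ≤ 1 - lam i / sig2 i := fun i =>
    sub_nonneg.2 ((div_lt_one (hsig_pos i)).2 (hlt i)).le
  obtain ⟨σ, hσ_inj, hσ⟩ := exists_injective_sq_eq_ite hP01 hProw hPcol
  have hσa : σ a = b := by
    by_contra h
    exact hPab (pow_eq_zero_iff two_ne_zero |>.1 (by rw [hσ, if_neg (Ne.symm h)]))
  obtain ⟨p, q, hpq, hσqp⟩ := exists_lt_and_lt_of_injective hσ_inj (hσa.trans_ne hab.symm)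
  set γ := fun t => (givensRotation p q t * W1, W2 * (givensRotation p q t)ᵀ)
  rw [show (W1, W2) = γ 0 by simp [γ, givensRotation_zero]] at hloc
  have hmin := hloc.comp_continuous (by fun_prop : Continuous γ).continuousAt
  simp only [Function.comp_def, γ, LAEloss_givensRotation_mul X (fun i => (hlam_pos i).le) hd
    hUorth hW1 hW2 hpq.ne (sum_mul_mul_eq_zero_of_sq_eq_ite hσ (hσ_inj.ne hpq.ne) _)] at hmin
  have hc := nonneg_of_isLocalMin_add_sin_sq_mul hmin
  simp only [sub_mul, Finset.sum_sub_distrib, sum_sq_mul_eq_of_sq_eq_ite hσ] at hc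
  have hd_lt := strictAnti_one_sub_div hlam_mono (fun i => (hlam_pos i).le) hs_anti hsig_pos hσqp
  nlinarith [hlam_mono hpq]
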